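/- arXiv:1611.00154 — 5 statements merged into one kernel-verified Lean document; each statement's English description precedes it below -/
import Mathlib

section
/- There exists a constant C > 0 such that for every linear functional f : W → ℝ that is bounded with respect to ‖·‖_W (i.e., |f(w)| ≤ M‖w‖_W for all w ∈ W, with ‖f‖_{W'} denoting the least such M), there exist continuous linear functionals f₁ : R → ℝ and f₂ : S → ℝ satisfying f(w) = f₁(w) + f₂(s_w) for all w ∈ W, and ‖f₁‖_{R'} + ‖f₂‖_{S'} ≤ C ‖f‖_{W'}. (Paper's Lemma 2.1, part 2.) -/
/-- Paper's Lemma 2.1, part 2.  There is `C > 0` such that every linear functional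
`f` on `W = {w ∈ R | B w ∈ ι (S)}` bounded w.r.t. `‖w‖_W = ‖w‖_R + ‖s_w‖_S` splits as
`f w = f₁ w + f₂ s_w` with `f₁ ∈ R'`, `f₂ ∈ S'` and `‖f₁‖ + ‖f₂‖ ≤ C ‖f‖_{W'}`,
where `‖f‖_{W'}` is the least bound `M`. -/
theorem dual_of_configurated_space_splits
    {R S H : Type*}
    [NormedAddCommGroup R] [InnerProductSpace ℝ R] [CompleteSpace R]
    [NormedAddCommGroup S] [InnerProductSpace ℝ S] [CompleteSpace S]
    [NormedAddCommGroup H] [InnerProductSpace ℝ H] [CompleteSpace H]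
    (ι : S →L[ℝ] H) (hι : Function.Injective ι)
    (B : R →L[ℝ] H) :
    ∃ C : ℝ, 0 < C ∧
      ∀ f : R → ℝ,
        (∀ w₁ w₂ : R, (∃ s, ι s = B w₁) → (∃ s, ι s = B w₂) →
          f (w₁ + w₂) = f w₁ + f w₂) →
        (∀ (a : ℝ) (w : R), (∃ s, ι s = B w) → f (a • w) = a * f w) →
        (∃ M : ℝ, ∀ (w : R) (s : S), ι s = B w → |f w| ≤ M * (‖w‖ + ‖s‖)) →
        ∃ (f₁ : R →L[ℝ] ℝ) (f₂ : S →L[ℝ] ℝ),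
          (∀ (w : R) (s : S), ι s = B w → f w = f₁ w + f₂ s) ∧
          ‖f₁‖ + ‖f₂‖ ≤
            C * sInf {M : ℝ | 0 ≤ M ∧ ∀ (w : R) (s : S), ι s = B w →
              |f w| ≤ M * (‖w‖ + ‖s‖)} := by
  refine ⟨4, by norm_num, ?_⟩
  intro f hadd hsmul hbdd
  -- the set of bounds
  set A : Set ℝ := {M : ℝ | 0 ≤ M ∧ ∀ (w : R) (s : S), ι s = B w →
      |f w| ≤ M * (‖w‖ + ‖s‖)} with hA
  obtain ⟨M₀, hM₀⟩ := hbdd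
  have hAne : A.Nonempty := by
    refine ⟨max M₀ 0, le_max_right _ _, fun w s hs => ?_⟩
    exact (hM₀ w s hs).trans (by
      apply mul_le_mul_of_nonneg_right (le_max_left _ _)
      positivity)
  have hAbdd : BddBelow A := ⟨0, fun x hx => hx.1⟩
  -- the graph subspace
  set T : (R × S) →L[ℝ] H :=
    B.comp (ContinuousLinearMap.fst ℝ R S) - ι.comp (ContinuousLinearMap.snd ℝ R S) with hT
  set G : Submodule ℝ (R × S) := LinearMap.ker (T : (R × S) →ₗ[ℝ] H) with hG
  have hmem : ∀ p : R × S, p ∈ G ↔ ι p.2 = B p.1 := by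
    intro p
    simp only [hG, LinearMap.mem_ker, ContinuousLinearMap.coe_coe, hT,
      ContinuousLinearMap.sub_apply, ContinuousLinearMap.comp_apply,
      ContinuousLinearMap.coe_fst', ContinuousLinearMap.coe_snd', sub_eq_zero]
    exact eq_comm
  -- the linear functional on G
  have hex : ∀ p : ↥G, ∃ s, ι s = B (p : R × S).1 :=
    fun p => ⟨(p : R × S).2, (hmem _).1 p.2⟩
  set glin : ↥G →ₗ[ℝ] ℝ :=
    { toFun := fun p => f (p : R × S).1
      map_add' := fun p q => hadd _ _ (hex p) (hex q)
      map_smul' := fun a p => hsmul a _ (hex p) } with hglin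
  have hgb : ∀ M ∈ A, ∀ p : ↥G, ‖glin p‖ ≤ (2 * M) * ‖p‖ := by
    intro M hM p
    have h1 : |f (p : R × S).1| ≤ M * (‖(p : R × S).1‖ + ‖(p : R × S).2‖) :=
      hM.2 _ _ ((hmem _).1 p.2)
    have h2 : ‖(p : R × S).1‖ ≤ ‖p‖ := norm_fst_le (p : R × S)
    have h3 : ‖(p : R × S).2‖ ≤ ‖p‖ := norm_snd_le (p : R × S)
    calc ‖glin p‖ = |f (p : R × S).1| := rfl
      _ ≤ M * (‖(p : R × S).1‖ + ‖(p : R × S).2‖) := h1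
      _ ≤ M * (‖p‖ + ‖p‖) := by
          apply mul_le_mul_of_nonneg_left (add_le_add h2 h3) hM.1
      _ = (2 * M) * ‖p‖ := by ring
  obtain ⟨Ma, hMa⟩ := id hAne
  set g : ↥G →L[ℝ] ℝ := glin.mkContinuous (2 * Ma) (hgb Ma hMa) with hg
  have hgnorm : ∀ M ∈ A, ‖g‖ ≤ 2 * M := by
    intro M hM
    exact ContinuousLinearMap.opNorm_le_bound _ (by linarith [hM.1]) (hgb M hM)
  -- Hahn-Banach extension
  obtain ⟨F, hFext, hFnorm⟩ := exists_extension_norm_eq G g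
  refine ⟨F.comp (ContinuousLinearMap.inl ℝ R S), F.comp (ContinuousLinearMap.inr ℝ R S),
    ?_, ?_⟩
  · intro w s hs
    have hp : (w, s) ∈ G := (hmem (w, s)).2 hs
    have h1 : F (w, s) = f w := by
      have := hFext ⟨(w, s), hp⟩
      simpa [hglin, hg] using this
    have h2 : ((w, s) : R × S) = (w, 0) + (0, s) := by simp
    calc f w = F (w, s) := h1.symm
      _ = F (w, 0) + F (0, s) := by rw [h2, map_add]
      _ = _ := by simp [ContinuousLinearMap.comp_apply]
  · have hF1 : ‖F.comp (ContinuousLinearMap.inl ℝ R S)‖ ≤ ‖F‖ := by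
      apply ContinuousLinearMap.opNorm_le_bound _ (norm_nonneg F)
      intro w
      calc ‖F (w, 0)‖ ≤ ‖F‖ * ‖((w, 0) : R × S)‖ := F.le_opNorm _
        _ = ‖F‖ * ‖w‖ := by rw [Prod.norm_def]; simp
    have hF2 : ‖F.comp (ContinuousLinearMap.inr ℝ R S)‖ ≤ ‖F‖ := by
      apply ContinuousLinearMap.opNorm_le_bound _ (norm_nonneg F)
      intro s
      calc ‖F (0, s)‖ ≤ ‖F‖ * ‖((0, s) : R × S)‖ := F.le_opNorm _
        _ = ‖F‖ * ‖s‖ := by rw [Prod.norm_def]; simp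
    have hginf : ‖g‖ ≤ 2 * sInf A := by
      have : ‖g‖ / 2 ≤ sInf A := by
        apply le_csInf hAne
        intro M hM
        linarith [hgnorm M hM]
      linarith
    calc ‖F.comp (ContinuousLinearMap.inl ℝ R S)‖ + ‖F.comp (ContinuousLinearMap.inr ℝ R S)‖
        ≤ ‖F‖ + ‖F‖ := add_le_add hF1 hF2
      _ = 2 * ‖g‖ := by rw [hFnorm]; ring
      _ ≤ 4 * sInf A := by linarith
end

section
/- There exists a constant C > 0 such that for every r ∈ R, ‖B r‖_H ≤ C ‖B r‖_Y, where ‖B r‖_Y = inf{‖B r'‖_H + ‖s‖_S : r' ∈ R, s ∈ S, B r = B r' + ι s}. Equivalently: there is C > 0 such that for all r, r' ∈ R and s ∈ S with B r = B r' + ι s, one has ‖B r‖_H ≤ C (‖B r'‖_H + ‖s‖_S). (Paper's Lemma 2.3.) -/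
theorem ContinuousLinearMap.norm_add_apply_le {𝕜 E F : Type*} [NontriviallyNormedField 𝕜]
    [SeminormedAddCommGroup E] [NormedSpace 𝕜 E] [SeminormedAddCommGroup F] [NormedSpace 𝕜 F]
    (ι : E →L[𝕜] F) (x : F) (s : E) : ‖x + ι s‖ ≤ (‖ι‖ + 1) * (‖x‖ + ‖s‖) :=
  calc ‖x + ι s‖ ≤ ‖x‖ + ‖ι‖ * ‖s‖ := (norm_add_le _ _).trans (by gcongr; exact ι.le_opNorm s)
    _ ≤ (‖ι‖ + 1) * (‖x‖ + ‖s‖) := by nlinarith [norm_nonneg ι, norm_nonneg x, norm_nonneg s]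

theorem Real.le_mul_csInf {a C : ℝ} {T : Set ℝ} (hC : 0 < C) (hT : T.Nonempty)
    (h : ∀ t ∈ T, a ≤ C * t) : a ≤ C * sInf T := by
  rw [← div_le_iff₀' hC]
  exact le_csInf hT fun t ht => (div_le_iff₀' hC).2 (h t ht)

theorem norm_H_le_norm_Y_on_range_general
    {R S H : Type*}
    [NormedAddCommGroup R] [InnerProductSpace ℝ R]
    [NormedAddCommGroup S] [InnerProductSpace ℝ S]
    [NormedAddCommGroup H] [InnerProductSpace ℝ H]
    (ι : S →L[ℝ] H)
    (B : R →L[ℝ] H) :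
    ∃ C : ℝ, 0 < C ∧
      (∀ r : R,
        ‖B r‖ ≤ C * sInf {t : ℝ | ∃ (r' : R) (s : S), B r = B r' + ι s ∧ t = ‖B r'‖ + ‖s‖}) ∧
      (∀ (r r' : R) (s : S), B r = B r' + ι s → ‖B r‖ ≤ C * (‖B r'‖ + ‖s‖)) := by
  have bound : ∀ (r r' : R) (s : S), B r = B r' + ι s → ‖B r‖ ≤ (‖ι‖ + 1) * (‖B r'‖ + ‖s‖) :=
    fun r r' s h => h ▸ ι.norm_add_apply_le (B r') s
  refine ⟨‖ι‖ + 1, by positivity, fun r => ?_, bound⟩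
  have trivial_decomposition : B r = B r + ι 0 := by simp
  refine Real.le_mul_csInf (by positivity) ⟨_, r, 0, trivial_decomposition, rfl⟩ ?_
  rintro t ⟨r', s, h, rfl⟩
  exact bound r r' s h

/-- Paper's Lemma 2.3.  With `Y = B(R) + ι(S)`, `‖y‖_Y = inf {‖B r‖ + ‖s‖ | y = B r + ι s}`,
there is `C > 0` such that `‖B r‖_H ≤ C ‖B r‖_Y` for every `r ∈ R`; equivalently,
`‖B r‖_H ≤ C (‖B r'‖_H + ‖s‖_S)` whenever `B r = B r' + ι s`. -/
theorem norm_H_le_norm_Y_on_range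
    {R S H : Type*}
    [NormedAddCommGroup R] [InnerProductSpace ℝ R] [CompleteSpace R]
    [NormedAddCommGroup S] [InnerProductSpace ℝ S] [CompleteSpace S]
    [NormedAddCommGroup H] [InnerProductSpace ℝ H] [CompleteSpace H]
    (ι : S →L[ℝ] H) (hι : Function.Injective ι)
    (B : R →L[ℝ] H) :
    ∃ C : ℝ, 0 < C ∧
      (∀ r : R,
        ‖B r‖ ≤ C * sInf {t : ℝ | ∃ (r' : R) (s : S), B r = B r' + ι s ∧ t = ‖B r'‖ + ‖s‖}) ∧
      (∀ (r r' : R) (s : S), B r = B r' + ι s → ‖B r‖ ≤ C * (‖B r'‖ + ‖s‖)) :=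
  norm_H_le_norm_Y_on_range_general ι B
end

section
/- Let r ∈ R and s ∈ S. The following four statements are equivalent: (1) B r = ι s; (2) B r ∈ ι(S), and for the unique s' ∈ S with ι s' = B r one has g(s') = g(s) for every continuous linear functional g : S → ℝ; (3) ι s ∈ B(R), and l(B r) = l(ι s) for every continuous linear functional l on the subspace B(R) of H (with the H-norm); (4) l(B r − ι s) = 0 for every linear functional l : Y → ℝ that is bounded with respect to ‖·‖_Y, equivalently ‖B r − ι s‖_Y = 0. (Paper's Lemma 2.5.) -/
/-!
Conditions (2) and (3) reduce to (1) because continuous linear functionals separate points of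
any real normed space (Hahn–Banach). For (4), the sum-space norm dominates the `H`-norm up to
the constant `max 1 ‖ι‖`, since `‖B r' + ι s'‖ ≤ ‖B r'‖ + ‖ι‖ ‖s'‖`; so it vanishes only at `0`.
-/

/-- The sum-space norm `‖y‖_Y = inf {‖B r‖_H + ‖s‖_S | y = B r + ι s}` on
`Y = B(R) + ι(S)`. -/
noncomputable def normY
    {R S H : Type*}
    [NormedAddCommGroup R] [InnerProductSpace ℝ R]
    [NormedAddCommGroup S] [InnerProductSpace ℝ S]
    [NormedAddCommGroup H] [InnerProductSpace ℝ H]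
    (B : R →L[ℝ] H) (ι : S →L[ℝ] H) (y : H) : ℝ :=
  sInf {t : ℝ | ∃ (r : R) (s : S), y = B r + ι s ∧ t = ‖B r‖ + ‖s‖}

section

variable {R S H : Type*}
  [NormedAddCommGroup R] [InnerProductSpace ℝ R]
  [NormedAddCommGroup S] [InnerProductSpace ℝ S]
  [NormedAddCommGroup H] [InnerProductSpace ℝ H]
  (B : R →L[ℝ] H) (ι : S →L[ℝ] H)

theorem normY_nonneg (y : H) : 0 ≤ normY B ι y :=
  Real.sInf_nonneg fun _ ⟨_, _, _, ht⟩ => ht ▸ by positivity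

theorem normY_zero : normY B ι 0 = 0 :=
  le_antisymm
    (csInf_le ⟨0, fun _ ⟨_, _, _, ht⟩ => ht ▸ by positivity⟩ ⟨0, 0, by simp, by simp⟩)
    (normY_nonneg B ι 0)

theorem norm_le_mul_normY {y : H} (hy : ∃ (r : R) (s : S), y = B r + ι s) :
    ‖y‖ ≤ max 1 ‖ι‖ * normY B ι y := by
  obtain ⟨r, s, rfl⟩ := hy
  have hC : 0 < max 1 ‖ι‖ := lt_max_of_lt_left one_pos
  rw [← div_le_iff₀' hC]
  refine le_csInf ⟨_, r, s, rfl, rfl⟩ fun t ⟨r', s', heq, ht⟩ => ?_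
  rw [div_le_iff₀' hC, heq, ht]
  calc ‖B r' + ι s'‖ ≤ ‖B r'‖ + ‖ι s'‖ := norm_add_le _ _
    _ ≤ ‖B r'‖ + ‖ι‖ * ‖s'‖ := by gcongr; exact ι.le_opNorm s'
    _ ≤ max 1 ‖ι‖ * ‖B r'‖ + max 1 ‖ι‖ * ‖s'‖ := by
        gcongr
        · exact le_mul_of_one_le_left (norm_nonneg _) (le_max_left _ _)
        · exact le_max_right _ _
    _ = max 1 ‖ι‖ * (‖B r'‖ + ‖s'‖) := by ring

theorem normY_eq_zero_iff {y : H} (hy : ∃ (r : R) (s : S), y = B r + ι s) :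
    normY B ι y = 0 ↔ y = 0 := by
  refine ⟨fun h => norm_le_zero_iff.mp ?_, fun h => h ▸ normY_zero B ι⟩
  simpa [h] using norm_le_mul_normY B ι hy

end

theorem equivalent_characterizations_of_Bu_eq_phi_general
    {R S H : Type*}
    [NormedAddCommGroup R] [InnerProductSpace ℝ R]
    [NormedAddCommGroup S] [InnerProductSpace ℝ S]
    [NormedAddCommGroup H] [InnerProductSpace ℝ H]
    (ι : S →L[ℝ] H) (hι : Function.Injective ι)
    (B : R →L[ℝ] H)
    (r : R) (s : S) :
    (B r = ι s ↔
      ((∃ s' : S, ι s' = B r) ∧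
        ∀ s' : S, ι s' = B r → ∀ g : S →L[ℝ] ℝ, g s' = g s)) ∧
    (B r = ι s ↔
      ((∃ r' : R, B r' = ι s) ∧
        ∀ (h' : ι s ∈ LinearMap.range (B : R →ₗ[ℝ] H))
          (l : (LinearMap.range (B : R →ₗ[ℝ] H) : Submodule ℝ H) →L[ℝ] ℝ),
          l ⟨B r, LinearMap.mem_range_self (B : R →ₗ[ℝ] H) r⟩ = l ⟨ι s, h'⟩)) ∧
    (B r = ι s ↔ normY B ι (B r - ι s) = 0) := by
  refine ⟨⟨fun h => ⟨⟨s, h.symm⟩, fun s' hs' g => by rw [hι (hs'.trans h)]⟩, ?_⟩,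
    ⟨fun h => ⟨⟨r, h⟩, fun _ l => congrArg l (Subtype.ext h)⟩, ?_⟩, ?_⟩
  · rintro ⟨⟨s', hs'⟩, hg⟩
    rw [← hs', (SeparatingDual.eq_iff_forall_dual_eq (R := ℝ)).mpr (hg s' hs')]
  · rintro ⟨⟨r', hr'⟩, hl⟩
    exact congrArg Subtype.val
      ((SeparatingDual.eq_iff_forall_dual_eq (R := ℝ)).mpr (hl ⟨r', hr'⟩))
  · rw [normY_eq_zero_iff B ι ⟨r, -s, by rw [map_neg, sub_eq_add_neg]⟩, sub_eq_zero]

/-- Paper's Lemma 2.5.  For `r ∈ R`, `s ∈ S` the following are equivalent: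
(1) `B r = ι s`;
(2) `B r ∈ ι(S)` and every continuous linear functional on `S` agrees on `s` and on the
unique `s'` with `ι s' = B r`;
(3) `ι s ∈ B(R)` and every continuous linear functional on the subspace `B(R)` of `H`
agrees on `B r` and `ι s`;
(4) `‖B r − ι s‖_Y = 0`, i.e. every `‖·‖_Y`-bounded linear functional on `Y`
annihilates `B r − ι s`. -/
theorem equivalent_characterizations_of_Bu_eq_phi
    {R S H : Type*}
    [NormedAddCommGroup R] [InnerProductSpace ℝ R] [CompleteSpace R]
    [NormedAddCommGroup S] [InnerProductSpace ℝ S] [CompleteSpace S]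
    [NormedAddCommGroup H] [InnerProductSpace ℝ H] [CompleteSpace H]
    (ι : S →L[ℝ] H) (hι : Function.Injective ι)
    (B : R →L[ℝ] H) (hBR : IsClosed (Set.range B))
    (r : R) (s : S) :
    (B r = ι s ↔
      ((∃ s' : S, ι s' = B r) ∧
        ∀ s' : S, ι s' = B r → ∀ g : S →L[ℝ] ℝ, g s' = g s)) ∧
    (B r = ι s ↔
      ((∃ r' : R, B r' = ι s) ∧
        ∀ (h' : ι s ∈ LinearMap.range (B : R →ₗ[ℝ] H))
          (l : (LinearMap.range (B : R →ₗ[ℝ] H) : Submodule ℝ H) →L[ℝ] ℝ),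
          l ⟨B r, LinearMap.mem_range_self (B : R →ₗ[ℝ] H) r⟩ = l ⟨ι s, h'⟩)) ∧
    (B r = ι s ↔ normY B ι (B r - ι s) = 0) :=
  equivalent_characterizations_of_Bu_eq_phi_general ι hι B r s
end

section
/- Assume the range B(R) is closed in H. Then there exists a constant C > 0 with the following property: for every y ∈ Y and every real number κ > ‖y‖_Y, there exist r ∈ R and s ∈ S such that y = B r + ι s and ‖r‖_R + ‖s‖_S ≤ C κ. In particular, every element of Y admits a decomposition y = B r + ι s with ‖r‖_R + ‖s‖_S controlled, up to a uniform constant, by ‖y‖_Y. (The stable decomposition established in the proof of the paper's Theorem 2.1.) -/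
/-- The stable decomposition in the proof of the paper's Theorem 2.1.
Assume `B(R)` is closed in `H`.  There is `C > 0` such that every `y ∈ Y = B(R) + ι(S)`
and every `κ > ‖y‖_Y` admit `r ∈ R`, `s ∈ S` with `y = B r + ι s` and
`‖r‖_R + ‖s‖_S ≤ C κ`. -/
theorem stable_decomposition_of_sum_space
    {R S H : Type*}
    [NormedAddCommGroup R] [InnerProductSpace ℝ R] [CompleteSpace R]
    [NormedAddCommGroup S] [InnerProductSpace ℝ S] [CompleteSpace S]
    [NormedAddCommGroup H] [InnerProductSpace ℝ H] [CompleteSpace H]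
    (ι : S →L[ℝ] H) (hι : Function.Injective ι)
    (B : R →L[ℝ] H) (hBR : IsClosed (Set.range B)) :
    ∃ C : ℝ, 0 < C ∧
      ∀ (y : H) (κ : ℝ), (∃ (r : R) (s : S), y = B r + ι s) → normY B ι y < κ →
        ∃ (r : R) (s : S), y = B r + ι s ∧ ‖r‖ + ‖s‖ ≤ C * κ := by
  -- The range of `B` as a closed submodule is a Banach space.
  set M : Submodule ℝ H := LinearMap.range (B : R →ₗ[ℝ] H) with hM
  have hMclosed : IsClosed (M : Set H) := by
    simpa [hM, LinearMap.coe_range] using hBR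
  haveI : CompleteSpace M := hMclosed.completeSpace_coe
  -- corestriction of B to its range is surjective
  let B' : R →L[ℝ] M := B.codRestrict M (fun r => LinearMap.mem_range_self _ r)
  have hB'surj : Function.Surjective B' := by
    rintro ⟨h, r, rfl⟩
    exact ⟨r, rfl⟩
  obtain ⟨C, hCpos, hC⟩ := B'.exists_preimage_norm_le hB'surj
  refine ⟨max C 1, lt_max_of_lt_right one_pos, ?_⟩
  rintro y κ ⟨r0, s0, hy0⟩ hκ
  -- extract a decomposition with ‖B r‖ + ‖s‖ < κ
  have hne : {t : ℝ | ∃ (r : R) (s : S), y = B r + ι s ∧ t = ‖B r‖ + ‖s‖}.Nonempty :=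
    ⟨‖B r0‖ + ‖s0‖, r0, s0, hy0, rfl⟩
  have hbdd : BddBelow {t : ℝ | ∃ (r : R) (s : S), y = B r + ι s ∧ t = ‖B r‖ + ‖s‖} := by
    refine ⟨0, ?_⟩
    rintro t ⟨r, s, -, rfl⟩
    positivity
  obtain ⟨t, ht, htκ⟩ := (csInf_lt_iff hbdd hne).mp hκ
  obtain ⟨r, s, hy, rfl⟩ := ht
  -- get a controlled preimage of B r
  obtain ⟨r', hr', hr'n⟩ := hC (B' r)
  have hBr' : B r' = B r := congrArg Subtype.val hr'
  have hB'r : ‖B' r‖ = ‖B r‖ := rfl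
  refine ⟨r', s, by rw [hy, hBr'], ?_⟩
  have h1 : ‖r'‖ + ‖s‖ ≤ C * ‖B r‖ + ‖s‖ := by
    rw [hB'r] at hr'n; linarith
  have h2 : C * ‖B r‖ + ‖s‖ ≤ max C 1 * (‖B r‖ + ‖s‖) := by
    have hC1 : C ≤ max C 1 := le_max_left _ _
    have h11 : (1:ℝ) ≤ max C 1 := le_max_right _ _
    nlinarith [norm_nonneg (B r), norm_nonneg s]
  have h3 : max C 1 * (‖B r‖ + ‖s‖) ≤ max C 1 * κ := by
    apply mul_le_mul_of_nonneg_left htκ.le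
    exact le_trans zero_le_one (le_max_right _ _)
  linarith
end

section
/- Assume the range B(R) is closed in H, and let c : Y × Y → ℝ be a symmetric bilinear form for which there exist constants 0 < m ≤ M with m ‖y‖_Y² ≤ c(y, y) and |c(y, z)| ≤ M ‖y‖_Y ‖z‖_Y for all y, z ∈ Y. Then the inf-sup condition holds: there exists C > 0 such that for every η ∈ Y with η ≠ 0 there exist u ∈ R and φ ∈ S, not both zero, with c(B u − ι φ, η) ≥ C (‖u‖_R + ‖φ‖_S) ‖η‖_Y. (The inf-sup condition (2.10) in the proof of the paper's Theorem 2.1.) -/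
/-- Membership in the sum space `Y = B(R) + ι(S) ⊆ H`. -/
def memY
    {R S H : Type*}
    [NormedAddCommGroup R] [InnerProductSpace ℝ R]
    [NormedAddCommGroup S] [InnerProductSpace ℝ S]
    [NormedAddCommGroup H] [InnerProductSpace ℝ H]
    (B : R →L[ℝ] H) (ι : S →L[ℝ] H) (y : H) : Prop :=
  ∃ (r : R) (s : S), y = B r + ι s

/-- The inf-sup condition (2.10) in the proof of the paper's Theorem 2.1.
Assume `B(R)` is closed in `H` and `c` is a symmetric bilinear form on `Y = B(R) + ι(S)`
with `m ‖y‖_Y² ≤ c(y,y)` and `|c(y,z)| ≤ M ‖y‖_Y ‖z‖_Y` for constants `0 < m ≤ M`.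
Then there is `C > 0` such that for every `η ∈ Y`, `η ≠ 0`, some `u ∈ R`, `φ ∈ S`,
not both zero, satisfy `c(B u − ι φ, η) ≥ C (‖u‖_R + ‖φ‖_S) ‖η‖_Y`. -/
theorem infsup_condition
    {R S H : Type*}
    [NormedAddCommGroup R] [InnerProductSpace ℝ R] [CompleteSpace R]
    [NormedAddCommGroup S] [InnerProductSpace ℝ S] [CompleteSpace S]
    [NormedAddCommGroup H] [InnerProductSpace ℝ H] [CompleteSpace H]
    (ι : S →L[ℝ] H) (hι : Function.Injective ι)
    (B : R →L[ℝ] H) (hBR : IsClosed (Set.range B))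
    (c : H → H → ℝ) (m M : ℝ) (hm : 0 < m) (hmM : m ≤ M)
    (hsymm : ∀ y z : H, memY B ι y → memY B ι z → c y z = c z y)
    (hadd : ∀ y₁ y₂ z : H, memY B ι y₁ → memY B ι y₂ → memY B ι z →
      c (y₁ + y₂) z = c y₁ z + c y₂ z)
    (hsmul : ∀ (a : ℝ) (y z : H), memY B ι y → memY B ι z → c (a • y) z = a * c y z)
    (hcoer : ∀ y : H, memY B ι y → m * (normY B ι y) ^ 2 ≤ c y y)
    (hbdd : ∀ y z : H, memY B ι y → memY B ι z →
      |c y z| ≤ M * normY B ι y * normY B ι z) :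
    ∃ C : ℝ, 0 < C ∧
      ∀ η : H, memY B ι η → η ≠ 0 →
        ∃ (u : R) (φ : S), ¬(u = 0 ∧ φ = 0) ∧
          C * ((‖u‖ + ‖φ‖) * normY B ι η) ≤ c (B u - ι φ) η := by
  -- open mapping: bounded right inverse for B onto its range
  have hclosed : IsClosed ((LinearMap.range (B : R →ₗ[ℝ] H) : Submodule ℝ H) : Set H) := by
    rwa [LinearMap.coe_range]
  haveI : CompleteSpace (LinearMap.range (B : R →ₗ[ℝ] H)) := hclosed.completeSpace_coe
  set Bc : R →L[ℝ] (LinearMap.range (B : R →ₗ[ℝ] H)) :=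
    B.codRestrict (LinearMap.range (B : R →ₗ[ℝ] H)) (fun r => LinearMap.mem_range_self _ r) with hBc
  have hsurj : Function.Surjective Bc := by
    rintro ⟨y, r, rfl⟩
    exact ⟨r, rfl⟩
  obtain ⟨K, hKpos, hK⟩ := Bc.exists_preimage_norm_le hsurj
  set K' : ℝ := max K 1 with hK'def
  have hK'1 : (1 : ℝ) ≤ K' := le_max_right _ _
  have hK'pos : 0 < K' := lt_of_lt_of_le one_pos hK'1
  refine ⟨m / (2 * K'), by positivity, ?_⟩
  intro η hη hη0
  set N := normY B ι η with hN
  -- N > 0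
  have hTne : {t : ℝ | ∃ (r : R) (s : S), η = B r + ι s ∧ t = ‖B r‖ + ‖s‖}.Nonempty := by
    obtain ⟨r, s, hrs⟩ := hη
    exact ⟨‖B r‖ + ‖s‖, r, s, hrs, rfl⟩
  have hlb : ∀ t ∈ {t : ℝ | ∃ (r : R) (s : S), η = B r + ι s ∧ t = ‖B r‖ + ‖s‖},
      ‖η‖ / (1 + ‖ι‖) ≤ t := by
    rintro t ⟨r, s, hrs, rfl⟩
    have h1 : ‖η‖ ≤ (1 + ‖ι‖) * (‖B r‖ + ‖s‖) := by
      have h2 : ‖η‖ ≤ ‖B r‖ + ‖ι s‖ := hrs ▸ norm_add_le _ _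
      have h3 : ‖ι s‖ ≤ ‖ι‖ * ‖s‖ := ι.le_opNorm s
      nlinarith [norm_nonneg (B r), norm_nonneg s, norm_nonneg ι]
    rw [div_le_iff₀ (by positivity)]
    linarith
  have hNpos : 0 < N := by
    have h1 : ‖η‖ / (1 + ‖ι‖) ≤ N := le_csInf hTne hlb
    have h2 : 0 < ‖η‖ / (1 + ‖ι‖) := by
      have := norm_pos_iff.mpr hη0
      positivity
    linarith
  -- choose a near-optimal decomposition
  have hbdd' : BddBelow {t : ℝ | ∃ (r : R) (s : S), η = B r + ι s ∧ t = ‖B r‖ + ‖s‖} :=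
    ⟨‖η‖ / (1 + ‖ι‖), hlb⟩
  have hlt : N < 2 * N := by linarith
  obtain ⟨t, ⟨r, s, hrs, rfl⟩, htlt⟩ := (csInf_lt_iff hbdd' hTne).mp hlt
  -- bounded right inverse element
  obtain ⟨u, huB, hunorm⟩ := hK (Bc r)
  have huBr : B u = B r := congrArg Subtype.val huB
  have hBcnorm : ‖Bc r‖ = ‖B r‖ := rfl
  refine ⟨u, -s, ?_, ?_⟩
  · rintro ⟨hu0, hs0⟩
    apply hη0
    have : s = 0 := by simpa using congrArg Neg.neg hs0
    rw [hrs, ← huBr, hu0, this, map_zero, map_zero, add_zero]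
  · have hηeq : B u - ι (-s) = η := by
      rw [map_neg, sub_neg_eq_add, huBr, hrs]
    rw [hηeq]
    have hc : m * N ^ 2 ≤ c η η := hcoer η hη
    have hub : ‖u‖ + ‖(-s : S)‖ ≤ K' * (2 * N) := by
      rw [norm_neg]
      have h1 : ‖u‖ ≤ K * ‖B r‖ := by rw [← hBcnorm]; exact hunorm
      have h2 : K ≤ K' := le_max_left _ _
      have h3 : ‖B r‖ + ‖s‖ ≤ 2 * N := le_of_lt htlt
      have h4 : K' * (‖B r‖ + ‖s‖) ≤ K' * (2 * N) :=
        mul_le_mul_of_nonneg_left h3 hK'pos.le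
      have h5 : K * ‖B r‖ ≤ K' * ‖B r‖ := mul_le_mul_of_nonneg_right h2 (norm_nonneg _)
      have h6 : ‖s‖ ≤ K' * ‖s‖ := le_mul_of_one_le_left (norm_nonneg _) hK'1
      calc ‖u‖ + ‖s‖ ≤ K' * ‖B r‖ + K' * ‖s‖ := by linarith
        _ = K' * (‖B r‖ + ‖s‖) := by ring
        _ ≤ K' * (2 * N) := h4
    have e2 : (‖u‖ + ‖(-s : S)‖) * N ≤ K' * (2 * N) * N :=
      mul_le_mul_of_nonneg_right hub hNpos.le
    have e3 : m / (2 * K') * ((‖u‖ + ‖(-s : S)‖) * N) ≤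
        m / (2 * K') * (K' * (2 * N) * N) :=
      mul_le_mul_of_nonneg_left e2 (by positivity)
    have e1 : m / (2 * K') * (K' * (2 * N) * N) = m * N ^ 2 := by
      field_simp
    rw [e1] at e3
    exact le_trans e3 hc
end
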